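/- Let u be an integer, let c be an integer with c = 4d₀ if u ≥ 0 and c = -4d₀ if u < 0 for some positive integer d₀, and set α = |2c + 2u|, assumed positive. Let n be a positive integer and let D ⊆ [1, n] be a Sidon set. Then the set A₁ = 3α*D ∪ {-c, c + u} satisfies r_{A₁}(m) = 1 for every m ∈ 2A₁ and r_{A₁}(m) = 0 for every m ∉ 2A₁; in particular A₁ is a Sidon set containing a representation of u = (-c) + (c + u). -/
import Mathlib


/-- The representation function of a set `A` of integers:
`r_A(n) = card {(a,b) : a, b ∈ A, a ≤ b, a + b = n}`, valued in `ℕ∞`. -/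
noncomputable def repFn (A : Set ℤ) (n : ℤ) : ℕ∞ :=
  {p : ℤ × ℤ | p.1 ∈ A ∧ p.2 ∈ A ∧ p.1 ≤ p.2 ∧ p.1 + p.2 = n}.encard

/-- The counting function of a set `A` of integers:
`A(y, x) = card {a ∈ A : y ≤ a ≤ x}`. -/
noncomputable def countFn (A : Set ℤ) (y x : ℝ) : ℕ :=
  {a : ℤ | a ∈ A ∧ y ≤ (a : ℝ) ∧ (a : ℝ) ≤ x}.ncard

open Pointwise

/-- A set `D` of integers is a Sidon set if whenever `d₁ + d₂ = d₃ + d₄` with all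
`dᵢ ∈ D`, `d₁ ≤ d₂` and `d₃ ≤ d₄`, then `d₁ = d₃` and `d₂ = d₄`. -/
def IsSidon (D : Set ℤ) : Prop :=
  ∀ d₁ ∈ D, ∀ d₂ ∈ D, ∀ d₃ ∈ D, ∀ d₄ ∈ D,
    d₁ ≤ d₂ → d₃ ≤ d₄ → d₁ + d₂ = d₃ + d₄ → d₁ = d₃ ∧ d₂ = d₄

theorem stmt_13 (u : ℤ) (d₀ : ℕ) (hd₀ : 0 < d₀)
    (c : ℤ) (hc1 : 0 ≤ u → c = 4 * (d₀ : ℤ)) (hc2 : u < 0 → c = -(4 * (d₀ : ℤ)))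
    (α : ℤ) (hα : α = |2 * c + 2 * u|) (hαpos : 0 < α)
    (n : ℤ) (hn : 0 < n)
    (D : Set ℤ) (hD : D ⊆ Set.Icc 1 n) (hDS : IsSidon D)
    (A₁ : Set ℤ) (hA₁ : A₁ = (fun d => 3 * α * d) '' D ∪ ({-c, c + u} : Set ℤ)) :
    (∀ m ∈ A₁ + A₁, repFn A₁ m = 1) ∧
    (∀ m ∉ A₁ + A₁, repFn A₁ m = 0) ∧
    IsSidon A₁ ∧ -c ∈ A₁ ∧ c + u ∈ A₁ ∧ u = -c + (c + u) := by
  have hcase : (0 ≤ u ∧ c = 4*(d₀:ℤ) ∧ α = 2*c+2*u) ∨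
      (u < 0 ∧ c = -(4*(d₀:ℤ)) ∧ α = -(2*c+2*u)) := by
    rcases le_or_gt 0 u with h | h
    · have hc := hc1 h
      exact Or.inl ⟨h, hc, by rw [hα, abs_of_pos (by omega)]⟩
    · have hc := hc2 h
      exact Or.inr ⟨h, hc, by rw [hα, abs_of_neg (by omega)]⟩
  have hspec : ∀ s : ℤ, s = -c ∨ s = c + u → s ≠ 0 ∧ -α ≤ 2*s ∧ 2*s ≤ α := by
    intro s hs
    rcases hcase with ⟨hu, hcv, hav⟩ | ⟨hu, hcv, hav⟩ <;> rcases hs with rfl | rfl <;> omega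
  have himg : ∀ x ∈ D, 3*α ≤ 3*α*x := by
    intro x hx
    have h1 : 1 ≤ x := (hD hx).1
    nlinarith [hαpos]
  have lem30 : ∀ s k : ℤ, s ≠ 0 → -α ≤ 2*s → 2*s ≤ α → s ≠ 3*α*k := by
    intro s k h0 hl hr heq
    rcases lt_trichotomy k 0 with hk | rfl | hk
    · have hk1 : k ≤ -1 := by omega
      have hstep : α ≤ α * (-k) := by nlinarith
      have h2 : 2*s = -(6*(α*(-k))) := by linear_combination 2*heq
      linarith
    · simp at heq; exact h0 heq
    · have hk1 : 1 ≤ k := hk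
      have hstep : α ≤ α * k := by nlinarith
      have h2 : 2*s = 6*(α*k) := by linear_combination 2*heq
      linarith
  have lem11 : ∀ s s' a a' : ℤ, -α ≤ 2*s → 2*s ≤ α → -α ≤ 2*s' → 2*s' ≤ α →
      s + 3*α*a = s' + 3*α*a' → a = a' ∧ s = s' := by
    intro s s' a a' h1 h2 h3 h4 heq
    have ha : a = a' := by
      rcases lt_trichotomy a a' with h | h | h
      · exfalso
        have hstep : α ≤ α * (a' - a) := by nlinarith
        have hre : s - s' = 3*(α*(a'-a)) := by linear_combination heq
        linarith
      · exact h
      · exfalso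
        have hstep : α ≤ α * (a - a') := by nlinarith
        have hre : s' - s = 3*(α*(a-a')) := by linear_combination -heq
        linarith
    subst ha
    exact ⟨rfl, by linarith⟩
  have hSidon : IsSidon A₁ := by
    intro d₁ h1 d₂ h2 d₃ h3 d₄ h4 h12 h34 heq
    rw [hA₁] at h1 h2 h3 h4
    simp only [Set.mem_union, Set.mem_image, Set.mem_insert_iff,
      Set.mem_singleton_iff] at h1 h2 h3 h4
    rcases h1 with ⟨a, ha, rfl⟩ | hs1 <;> rcases h2 with ⟨b, hb, rfl⟩ | hs2 <;>
      rcases h3 with ⟨a', ha', rfl⟩ | hs3 <;> rcases h4 with ⟨b', hb', rfl⟩ | hs4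
    -- 1: IIII
    · have h3α : (0:ℤ) < 3*α := by linarith
      have hab : a + b = a' + b' := by
        have h' : 3*α*(a+b) = 3*α*(a'+b') := by ring_nf; linear_combination heq
        exact mul_left_cancel₀ (by linarith : (3*α:ℤ) ≠ 0) h'
      obtain ⟨e1, e2⟩ := hDS a ha b hb a' ha' b' hb'
        (le_of_mul_le_mul_left h12 h3α) (le_of_mul_le_mul_left h34 h3α) hab
      exact ⟨by rw [e1], by rw [e2]⟩
    -- 2: II IS (x4 special): h34 contradiction
    · exfalso
      obtain ⟨h0, hl, hr⟩ := hspec d₄ hs4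
      linarith [himg a' ha', h34]
    -- 3: II SI
    · exfalso
      obtain ⟨h0, hl, hr⟩ := hspec d₃ hs3
      exact lem30 d₃ (a + b - b') h0 hl hr (by linear_combination -heq)
    -- 4: II SS
    · exfalso
      obtain ⟨h03, hl3, hr3⟩ := hspec d₃ hs3
      obtain ⟨h04, hl4, hr4⟩ := hspec d₄ hs4
      linarith [himg a ha, himg b hb]
    -- 5-8: IS** : h12 contradiction
    · exfalso
      obtain ⟨h0, hl, hr⟩ := hspec d₂ hs2
      linarith [himg a ha, h12]
    · exfalso
      obtain ⟨h0, hl, hr⟩ := hspec d₂ hs2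
      linarith [himg a ha, h12]
    · exfalso
      obtain ⟨h0, hl, hr⟩ := hspec d₂ hs2
      linarith [himg a ha, h12]
    · exfalso
      obtain ⟨h0, hl, hr⟩ := hspec d₂ hs2
      linarith [himg a ha, h12]
    -- 9: SI II
    · exfalso
      obtain ⟨h0, hl, hr⟩ := hspec d₁ hs1
      exact lem30 d₁ (a' + b' - b) h0 hl hr (by linear_combination heq)
    -- 10: SI IS : h34 contradiction
    · exfalso
      obtain ⟨h0, hl, hr⟩ := hspec d₄ hs4
      linarith [himg a' ha', h34]
    -- 11: SI SI
    · obtain ⟨h01, hl1, hr1⟩ := hspec d₁ hs1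
      obtain ⟨h03, hl3, hr3⟩ := hspec d₃ hs3
      obtain ⟨hbb, hss⟩ := lem11 d₁ d₃ b b' hl1 hr1 hl3 hr3 heq
      exact ⟨hss, by rw [hbb]⟩
    -- 12: SI SS
    · exfalso
      obtain ⟨h01, hl1, hr1⟩ := hspec d₁ hs1
      obtain ⟨h03, hl3, hr3⟩ := hspec d₃ hs3
      obtain ⟨h04, hl4, hr4⟩ := hspec d₄ hs4
      linarith [himg b hb]
    -- 13: SS II
    · exfalso
      obtain ⟨h01, hl1, hr1⟩ := hspec d₁ hs1
      obtain ⟨h02, hl2, hr2⟩ := hspec d₂ hs2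
      linarith [himg a' ha', himg b' hb']
    -- 14: SS IS : h34 contradiction
    · exfalso
      obtain ⟨h0, hl, hr⟩ := hspec d₄ hs4
      linarith [himg a' ha', h34]
    -- 15: SS SI
    · exfalso
      obtain ⟨h01, hl1, hr1⟩ := hspec d₁ hs1
      obtain ⟨h02, hl2, hr2⟩ := hspec d₂ hs2
      obtain ⟨h03, hl3, hr3⟩ := hspec d₃ hs3
      linarith [himg b' hb']
    -- 16: SS SS
    · rcases hcase with ⟨hu, hcv, hav⟩ | ⟨hu, hcv, hav⟩ <;>
        rcases hs1 with rfl | rfl <;> rcases hs2 with rfl | rfl <;>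
        rcases hs3 with rfl | rfl <;> rcases hs4 with rfl | rfl <;> omega
  have hzero : ∀ m ∉ A₁ + A₁, repFn A₁ m = 0 := by
    intro m hm
    rw [repFn, Set.encard_eq_zero]
    rw [Set.eq_empty_iff_forall_notMem]
    rintro ⟨a, b⟩ ⟨haA, hbA, -, hab⟩
    exact hm (hab ▸ Set.add_mem_add haA hbA)
  have hone : ∀ m ∈ A₁ + A₁, repFn A₁ m = 1 := by
    intro m hm
    rw [Set.mem_add] at hm
    obtain ⟨x, hx, y, hy, hxy⟩ := hm
    rcases le_total x y with h | h
    · rw [repFn, Set.encard_eq_one]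
      refine ⟨(x, y), ?_⟩
      ext ⟨a, b⟩
      simp only [Set.mem_setOf_eq, Set.mem_singleton_iff, Prod.mk.injEq]
      constructor
      · rintro ⟨ha, hb, hab, hsum⟩
        exact hSidon a ha b hb x hx y hy hab h (by omega)
      · rintro ⟨rfl, rfl⟩
        exact ⟨hx, hy, h, hxy⟩
    · rw [repFn, Set.encard_eq_one]
      refine ⟨(y, x), ?_⟩
      ext ⟨a, b⟩
      simp only [Set.mem_setOf_eq, Set.mem_singleton_iff, Prod.mk.injEq]
      constructor
      · rintro ⟨ha, hb, hab, hsum⟩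
        exact hSidon a ha b hb y hy x hx hab h (by omega)
      · rintro ⟨rfl, rfl⟩
        exact ⟨hy, hx, h, by omega⟩
  exact ⟨hone, hzero, hSidon, by simp [hA₁], by simp [hA₁], by ring⟩
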